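/- arXiv:2306.05020 — 2 statements merged into one kernel-verified Lean document; each statement's English description precedes it below -/
import Mathlib

section
/- For $k = 2\ell+1 > 7$ odd, the sets $\{1,2,4,6,8,\dots,2\ell-2,2\ell\}$ and $\{1,2,4,5,7,8,10,\dots,2\ell-2,2\ell\}$ are minimal vertex covers of the cycle $C_k$ of cardinalities $\ell+1$ and $\ell+2$ respectively; hence $C_k$ is not unmixed for odd $k > 7$. -/
/-- The cycle graph `C_k` on `ZMod k`. -/
def cycleG (k : ℕ) : SimpleGraph (ZMod k) where
  Adj i j := i ≠ j ∧ (j = i + 1 ∨ i = j + 1)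
  symm := ⟨by rintro i j ⟨h1, h2⟩; exact ⟨h1.symm, h2.symm⟩⟩
  loopless := ⟨by rintro i ⟨h1, _⟩; exact h1 rfl⟩

/-- A vertex cover of a graph on `ZMod k`. -/
def IsVCov {k : ℕ} (G : SimpleGraph (ZMod k)) (C : Finset (ZMod k)) : Prop :=
  ∀ ⦃i j⦄, G.Adj i j → i ∈ C ∨ j ∈ C

/-- A minimal vertex cover. -/
def IsMinVCov {k : ℕ} (G : SimpleGraph (ZMod k)) (C : Finset (ZMod k)) : Prop :=
  IsVCov G C ∧ ∀ C' ⊆ C, IsVCov G C' → C' = C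

/-!
Label the vertices of `C_k` by `0, …, k - 1`. For a set `S` of labels avoiding `0`, the vertices
`1, …, k - 1` form a path and `0` is the extra vertex closing it, which may be read as the label
`k` as well. So `S` covers `C_k` if every pair `n, n + 1` with `n < k` meets `S`, and it is a
minimal cover if moreover every `m ∈ S` has `m + 1` or `m - 1` outside `S`. Both sets of the
theorem pass these checks by parity arguments, and their sizes differ.
-/

open Finset

theorem IsVCov.isMinVCov {k : ℕ} {G : SimpleGraph (ZMod k)} {C : Finset (ZMod k)}
    (hC : IsVCov G C) (h : ∀ a ∈ C, ∃ b, G.Adj a b ∧ b ∉ C) : IsMinVCov G C := by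
  refine ⟨hC, fun C' hsub hC' => Subset.antisymm hsub fun a ha => ?_⟩
  obtain ⟨b, hab, hb⟩ := h a ha
  exact (hC' hab).resolve_right fun hb' => hb (hsub hb')

theorem natCast_mem_image_natCast_iff {k : ℕ} {S : Finset ℕ} (hS : ∀ m ∈ S, 0 < m ∧ m < k) {n : ℕ}
    (hn : n ≤ k) : (n : ZMod k) ∈ S.image Nat.cast ↔ n ∈ S := by
  refine ⟨fun h => ?_, mem_image_of_mem _⟩
  obtain ⟨m, hm, hmn⟩ := mem_image.mp h
  rw [ZMod.natCast_eq_natCast_iff', Nat.mod_eq_of_lt (hS m hm).2] at hmn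
  rcases hn.lt_or_eq with hn | rfl
  · rwa [hmn, Nat.mod_eq_of_lt hn] at hm
  · rw [Nat.mod_self] at hmn
    exact absurd hmn (hS m hm).1.ne'

theorem card_image_natCast_zmod {k : ℕ} {S : Finset ℕ} (hS : ∀ m ∈ S, m < k) :
    (S.image (Nat.cast : ℕ → ZMod k)).card = S.card := by
  refine card_image_of_injOn fun a ha b hb h => ?_
  rwa [ZMod.natCast_eq_natCast_iff', Nat.mod_eq_of_lt (hS a ha), Nat.mod_eq_of_lt (hS b hb)] at h

namespace cycleG

variable {k : ℕ}

theorem adj_add_one (hk : k ≠ 1) (x : ZMod k) : (cycleG k).Adj x (x + 1) :=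
  haveI := ZMod.nontrivial_iff.mpr hk
  ⟨by simp, Or.inl rfl⟩

theorem adj_sub_one (hk : k ≠ 1) (x : ZMod k) : (cycleG k).Adj x (x - 1) := by
  simpa using (adj_add_one hk (x - 1)).symm

theorem isVCov_of_forall {C : Finset (ZMod k)} (h : ∀ x, x ∈ C ∨ x + 1 ∈ C) :
    IsVCov (cycleG k) C := by
  rintro i j ⟨-, rfl | rfl⟩
  exacts [h i, (h j).symm]

theorem isMinVCov_of_forall (hk : k ≠ 1) {C : Finset (ZMod k)} (hcov : ∀ x, x ∈ C ∨ x + 1 ∈ C)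
    (hmin : ∀ x ∈ C, x + 1 ∉ C ∨ x - 1 ∉ C) : IsMinVCov (cycleG k) C := by
  refine (isVCov_of_forall hcov).isMinVCov fun x hx => ?_
  rcases hmin x hx with h | h
  exacts [⟨_, adj_add_one hk x, h⟩, ⟨_, adj_sub_one hk x, h⟩]

theorem isMinVCov_image_natCast (hk : k ≠ 0) {S : Finset ℕ} (hS : ∀ m ∈ S, 0 < m ∧ m < k)
    (hcov : ∀ n < k, n ∈ S ∨ n + 1 ∈ S) (hmin : ∀ m ∈ S, m + 1 ∉ S ∨ m - 1 ∉ S) :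
    IsMinVCov (cycleG k) (S.image Nat.cast) := by
  have : NeZero k := ⟨hk⟩
  have hk1 : k ≠ 1 := by
    rcases hcov 0 (Nat.pos_of_ne_zero hk) with h | h <;> have := hS _ h <;> omega
  refine isMinVCov_of_forall hk1 (fun x => ?_) fun x hx => ?_
  · rw [← ZMod.natCast_zmod_val x, ← Nat.cast_add_one]
    exact (hcov x.val x.val_lt).imp (mem_image_of_mem _) (mem_image_of_mem _)
  · obtain ⟨m, hm, rfl⟩ := mem_image.mp hx
    obtain ⟨hm0, hmk⟩ := hS m hm
    rw [← Nat.cast_add_one, ← Nat.cast_pred hm0, natCast_mem_image_natCast_iff hS hmk,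
      natCast_mem_image_natCast_iff hS (n := m - 1) (by omega)]
    exact hmin m hm

end cycleG

namespace OddCycle

def smallCover (ℓ : ℕ) : Finset ℕ :=
  insert 1 ((Icc 1 ℓ).image (fun j => 2 * j))

def largeCover (ℓ : ℕ) : Finset ℕ :=
  ({1, 2, 4, 5, 7, 8} : Finset ℕ) ∪ (Icc 5 ℓ).image (fun j => 2 * j)

variable {ℓ : ℕ}

theorem mem_smallCover {n : ℕ} :
    n ∈ smallCover ℓ ↔ n = 1 ∨ (n % 2 = 0 ∧ 2 ≤ n ∧ n ≤ 2 * ℓ) := by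
  simp only [smallCover, mem_insert, mem_image, mem_Icc]
  constructor
  · rintro (rfl | ⟨j, hj, rfl⟩) <;> omega
  · rintro (rfl | h)
    exacts [Or.inl rfl, Or.inr ⟨n / 2, by omega, by omega⟩]

theorem mem_largeCover {n : ℕ} :
    n ∈ largeCover ℓ ↔ n = 1 ∨ n = 2 ∨ n = 4 ∨ n = 5 ∨ n = 7 ∨ n = 8 ∨
      (n % 2 = 0 ∧ 10 ≤ n ∧ n ≤ 2 * ℓ) := by
  simp only [largeCover, mem_union, mem_insert, mem_singleton, mem_image, mem_Icc]
  constructor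
  · rintro (h | ⟨j, hj, rfl⟩) <;> omega
  · rintro (h | h | h | h | h | h | h)
    any_goals (left; omega)
    exact Or.inr ⟨n / 2, by omega, by omega⟩

theorem card_smallCover : (smallCover ℓ).card = ℓ + 1 := by
  rw [smallCover, card_insert_of_notMem (by simp only [mem_image]; omega),
    card_image_of_injective _ (fun a b h => by omega), Nat.card_Icc, Nat.add_sub_cancel]

theorem card_largeCover (hl : 4 ≤ ℓ) : (largeCover ℓ).card = ℓ + 2 := by
  rw [largeCover, card_union_of_disjoint (disjoint_left.mpr fun n h₁ h₂ => by
      simp only [mem_insert, mem_singleton, mem_image, mem_Icc] at h₁ h₂; omega),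
    card_image_of_injective _ (fun a b h => by omega), Nat.card_Icc,
    show ({1, 2, 4, 5, 7, 8} : Finset ℕ).card = 6 by decide]
  omega

theorem pos_and_lt_of_mem_smallCover (hl : 1 ≤ ℓ) {m : ℕ} (hm : m ∈ smallCover ℓ) :
    0 < m ∧ m < 2 * ℓ + 1 := by
  rw [mem_smallCover] at hm
  omega

theorem pos_and_lt_of_mem_largeCover (hl : 4 ≤ ℓ) {m : ℕ} (hm : m ∈ largeCover ℓ) :
    0 < m ∧ m < 2 * ℓ + 1 := by
  rw [mem_largeCover] at hm
  omega

theorem isMinVCov_smallCover (hl : 1 ≤ ℓ) :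
    IsMinVCov (cycleG (2 * ℓ + 1)) ((smallCover ℓ).image Nat.cast) :=
  cycleG.isMinVCov_image_natCast (by omega) (fun _ => pos_and_lt_of_mem_smallCover hl)
    (fun n hn => by simp only [mem_smallCover]; omega)
    (fun m hm => by rw [mem_smallCover] at hm; simp only [mem_smallCover]; omega)

theorem isMinVCov_largeCover (hl : 4 ≤ ℓ) :
    IsMinVCov (cycleG (2 * ℓ + 1)) ((largeCover ℓ).image Nat.cast) :=
  cycleG.isMinVCov_image_natCast (by omega) (fun _ => pos_and_lt_of_mem_largeCover hl)
    (fun n hn => by simp only [mem_largeCover]; omega)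
    (fun m hm => by rw [mem_largeCover] at hm; simp only [mem_largeCover]; omega)

theorem card_image_smallCover (hl : 1 ≤ ℓ) :
    ((smallCover ℓ).image (Nat.cast : ℕ → ZMod (2 * ℓ + 1))).card = ℓ + 1 := by
  rw [card_image_natCast_zmod fun _ hm => (pos_and_lt_of_mem_smallCover hl hm).2,
    card_smallCover]

theorem card_image_largeCover (hl : 4 ≤ ℓ) :
    ((largeCover ℓ).image (Nat.cast : ℕ → ZMod (2 * ℓ + 1))).card = ℓ + 2 := by
  rw [card_image_natCast_zmod fun _ hm => (pos_and_lt_of_mem_largeCover hl hm).2,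
    card_largeCover hl]

end OddCycle

/-- For odd `k = 2ℓ+1 > 7`, the sets `{1,2,4,6,8,…,2ℓ}` and
`{1,2,4,5,7,8,10,…,2ℓ-2,2ℓ}` are minimal vertex covers of the cycle `C_k` of
cardinalities `ℓ+1` and `ℓ+2` respectively; hence `C_k` is not unmixed. -/
theorem stmt13 (ℓ : ℕ) (hl : 4 ≤ ℓ) :
    let k := 2 * ℓ + 1
    let A : Finset (ZMod k) :=
      (insert 1 ((Finset.Icc 1 ℓ).image (fun j => 2 * j))).image (Nat.cast : ℕ → ZMod k)
    let B : Finset (ZMod k) :=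
      (({1, 2, 4, 5, 7, 8} : Finset ℕ) ∪ (Finset.Icc 5 ℓ).image (fun j => 2 * j)).image
        (Nat.cast : ℕ → ZMod k)
    IsMinVCov (cycleG k) A ∧ IsMinVCov (cycleG k) B ∧
      A.card = ℓ + 1 ∧ B.card = ℓ + 2 ∧
      ¬ ∀ C₁ C₂ : Finset (ZMod k), IsMinVCov (cycleG k) C₁ → IsMinVCov (cycleG k) C₂ →
          C₁.card = C₂.card := by
  intro k A B
  have hA : IsMinVCov (cycleG k) A := OddCycle.isMinVCov_smallCover (by omega)
  have hB : IsMinVCov (cycleG k) B := OddCycle.isMinVCov_largeCover hl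
  have cardA : A.card = ℓ + 1 := OddCycle.card_image_smallCover (by omega)
  have cardB : B.card = ℓ + 2 := OddCycle.card_image_largeCover hl
  refine ⟨hA, hB, cardA, cardB, fun h => ?_⟩
  have := h A B hA hB
  omega
end

section
/- Let $G = C_k$ be the odd cycle with $k = 2\ell+1$ vertices and let $Q_i$ be the ideal of $R_G$ generated by all monomials $x_Ft$ with $F$ a face of $G$ (singleton or edge) containing $i$. If a monomial $u = x_1^{a_1}\cdots x_k^{a_k}t^b$ lies in $\bigcap_{i=1}^k Q_i$, then $a_i \ge 1$ for all $i$ and $b \ge \ell+1$; that is, the initial degree (in the $t$-grading) of $\bigcap_{i=1}^k Q_i$ is $\ell+1$. -/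
open MvPolynomial

set_option synthInstance.maxHeartbeats 1000000

noncomputable section

/-- The ambient polynomial ring `K[x_i : i ∈ V][t]`, with the variable `none` playing
the role of `t`. -/
abbrev Amb (K V : Type*) [CommSemiring K] := MvPolynomial (Option V) K

variable (K : Type*) [Field K] {V : Type*} [DecidableEq V]

/-- The generator `t`. -/
def tGen : Amb K V := X none

/-- The generator `x_i t`. -/
def vGen (i : V) : Amb K V := X (some i) * X none

/-- The generator `x_i x_j t`. -/
def eGen (i j : V) : Amb K V := X (some i) * X (some j) * X none

variable (G : SimpleGraph V)

/-- The toric ring `R_G = K[t, {x_i t}, {x_i x_j t : {i,j} ∈ E(G)}]` of the graph `G`. -/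
def RG : Subalgebra K (Amb K V) :=
  Algebra.adjoin K
    ({tGen K} ∪ Set.range (vGen K (V := V)) ∪ {p | ∃ i j, G.Adj i j ∧ p = eGen K i j})

/-- The faces of the one-dimensional simplicial complex attached to `G`. -/
def IsFace (F : Finset V) : Prop :=
  F = ∅ ∨ (∃ i, F = {i}) ∨ ∃ i j, G.Adj i j ∧ F = {i, j}

/-- The monomial `x_F t`. -/
def faceMon (F : Finset V) : Amb K V := (∏ i ∈ F, X (some i)) * X none

/-- The ideal `P_0 = (t, x_1 t, …, x_n t)` of `R_G`. -/
def P0 : Ideal (RG K G) :=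
  Ideal.span {u : RG K G | ((u : Amb K V) = tGen K) ∨ ∃ i, (u : Amb K V) = vGen K i}

/-- The principal ideal `(t)` of `R_G`. -/
def tIdeal : Ideal (RG K G) := Ideal.span {u : RG K G | (u : Amb K V) = tGen K}

/-- The ideal `P_C` generated by the monomials `x_F t` for faces `F ⊆ C`. -/
def PC (C : Finset V) : Ideal (RG K G) :=
  Ideal.span {u : RG K G | ∃ F : Finset V, IsFace G F ∧ F ⊆ C ∧ (u : Amb K V) = faceMon K F}

/-- The ideal `Q_i` generated by the monomials `x_F t` for faces `F ∋ i`. -/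
def Qi (i : V) : Ideal (RG K G) :=
  Ideal.span {u : RG K G | ∃ F : Finset V, IsFace G F ∧ i ∈ F ∧ (u : Amb K V) = faceMon K F}

/-- A vertex cover of `G`. -/
def IsVertexCover (C : Finset V) : Prop := ∀ ⦃i j⦄, G.Adj i j → i ∈ C ∨ j ∈ C

/-- A minimal vertex cover of `G`. -/
def IsMinVertexCover (C : Finset V) : Prop :=
  IsVertexCover G C ∧ ∀ C' ⊆ C, IsVertexCover G C' → C' = C

/-- An induced odd cycle of `G`, given by an injective cyclic enumeration of its
vertices such that adjacency holds exactly between consecutive vertices. -/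
def IsInducedOddCycle {V : Type*} (G : SimpleGraph V) (m : ℕ) (c : ZMod m → V) : Prop :=
  3 ≤ m ∧ Odd m ∧ Function.Injective c ∧
    ∀ p q : ZMod m, G.Adj (c p) (c q) ↔ (q = p + 1 ∨ p = q + 1)

/-- The monomial `x^a t^b` of the ambient ring. -/
def monom [Fintype V] (a : V → ℕ) (b : ℕ) : Amb K V :=
  (∏ i, X (some i) ^ a i) * X none ^ b

/-- An element of `R_G` which is a monomial. -/
def IsMonomialElt [Fintype V] (u : RG K G) : Prop :=
  ∃ (a : V → ℕ) (b : ℕ), (u : Amb K V) = monom K a b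

/-- A monomial ideal of `R_G`. -/
def IsMonomialIdeal [Fintype V] (I : Ideal (RG K G)) : Prop :=
  ∃ S : Set (RG K G), (∀ u ∈ S, IsMonomialElt K G u) ∧ I = Ideal.span S

/-- A height one ideal of the domain `R_G`: a nonzero prime all of whose properly
contained primes are zero. -/
def HeightOne (I : Ideal (RG K G)) : Prop :=
  I.IsPrime ∧ I ≠ ⊥ ∧ ∀ J : Ideal (RG K G), J.IsPrime → J < I → J = ⊥

/-- The ideal contains the element `t`. -/
def ContainsT (I : Ideal (RG K G)) : Prop := ∃ u ∈ I, (u : Amb K V) = tGen K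

/-- The canonical ideal of `R_G` (for `R_G` normal): the intersection of all height one
monomial prime ideals. -/
def canonicalIdeal [Fintype V] : Ideal (RG K G) :=
  sInf {P : Ideal (RG K G) | HeightOne K G P ∧ IsMonomialIdeal K G P}

/-- `R_G` is Gorenstein: the canonical ideal (= canonical module) is isomorphic to
`R_G` as an `R_G`-module, equivalently it is a principal ideal, i.e. the canonical
class vanishes. -/
def IsGorensteinToric [Fintype V] : Prop :=
  (canonicalIdeal K G).IsPrincipal

/-!
Every generator `t`, `x_i t`, `x_i x_j t` of `R_G` has `x`-degree at most twice its `t`-degree,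
and the monomials with this property form a monoid, so every monomial `x^a t^b` of `R_G` has
`∑ a_i ≤ 2b`. Membership in `Q_i` forces `x_i ∣ u`, so all `2ℓ + 1` exponents are positive and
`2b ≥ 2ℓ + 1`. Conversely, `C_k` minus a vertex `i` is a path on `2ℓ` vertices with a perfect
matching `M`, and `x_1 ⋯ x_k t^(ℓ+1) = (x_i t) · ∏_{jj' ∈ M} x_j x_j' t` lies in `Q_i`.
-/

open Finset

lemma ZMod.prod_range_add_natCast {M : Type*} [CommMonoid M] (n : ℕ) (i : ZMod (n + 1))
    (f : ZMod (n + 1) → M) : ∏ m ∈ range (n + 1), f (i + m) = ∏ v, f v := by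
  rw [← Fin.prod_univ_eq_prod_range]
  exact Fintype.prod_equiv (Equiv.addLeft i) _ _ fun m =>
    congrArg (f <| i + ·) (ZMod.natCast_zmod_val m)

namespace MvPolynomial

variable {R σ : Type*} [CommSemiring R]

variable (R) in
noncomputable def restrictSupportSubalgebra (S : AddSubmonoid (σ →₀ ℕ)) :
    Subalgebra R (MvPolynomial σ R) :=
  (restrictSupport R (S : Set (σ →₀ ℕ))).toSubalgebra
    (by
      classical
      refine (mem_restrictSupport_iff R).2 fun d hd => ?_
      rw [one_def] at hd
      rw [Finset.mem_singleton.1 (support_monomial_subset hd)]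
      exact S.zero_mem)
    (fun p q hp hq => by
      classical
      refine (mem_restrictSupport_iff R).2 fun _ hde => ?_
      obtain ⟨d, hd, e, he, rfl⟩ := Finset.mem_add.1 (support_mul p q hde)
      exact S.add_mem ((mem_restrictSupport_iff R).1 hp hd)
        ((mem_restrictSupport_iff R).1 hq he))

lemma mem_restrictSupportSubalgebra {S : AddSubmonoid (σ →₀ ℕ)} {p : MvPolynomial σ R} :
    p ∈ restrictSupportSubalgebra R S ↔ ↑p.support ⊆ (S : Set (σ →₀ ℕ)) := .rfl

end MvPolynomial

open MvPolynomial

section ToricRing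

variable (K : Type*) [Field K] {V : Type*} (G : SimpleGraph V)

noncomputable def monomExponent [Fintype V] (a : V → ℕ) (b : ℕ) : Option V →₀ ℕ :=
  Finsupp.equivFunOnFinite.symm fun o => o.elim b a

lemma monom_eq_monomial [Fintype V] (a : V → ℕ) (b : ℕ) :
    monom K a b = monomial (monomExponent a b) 1 := by
  rw [monomial_eq, C_1, one_mul, Finsupp.prod_fintype _ _ fun _ => pow_zero _,
    Fintype.prod_option, monom, mul_comm]
  rfl

def balancedExponents (V : Type*) [Fintype V] : AddSubmonoid (Option V →₀ ℕ) where
  carrier := {d | ∑ i, d (some i) ≤ 2 * d none}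
  add_mem' {d e} hd he := by
    simp only [Set.mem_ofPred_eq, Finsupp.add_apply, sum_add_distrib] at *
    omega
  zero_mem' := by simp

lemma RG_le_restrictSupportSubalgebra [Fintype V] :
    RG K G ≤ restrictSupportSubalgebra K (balancedExponents V) := by
  classical
  refine Algebra.adjoin_le ?_
  rintro p ((rfl | ⟨i, rfl⟩) | ⟨i, j, -, rfl⟩) <;>
    simp only [SetLike.mem_coe, tGen, vGen, eGen, X, monomial_mul, one_mul] <;>
    refine (mem_restrictSupport_iff K).2
      ((Finset.coe_subset.2 support_monomial_subset).trans ?_) <;>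
    simp [balancedExponents, Finsupp.single_apply, sum_add_distrib]

lemma sum_le_two_mul_of_monom_mem_RG [Fintype V] {a : V → ℕ} {b : ℕ}
    (h : monom K a b ∈ RG K G) : ∑ i, a i ≤ 2 * b := by
  have h' := RG_le_restrictSupportSubalgebra K G h
  rw [monom_eq_monomial, mem_restrictSupportSubalgebra] at h'
  have hd : monomExponent a b ∈ balancedExponents V := h' (by classical simp [coeff_monomial])
  simpa [balancedExponents, monomExponent] using hd

lemma X_dvd_of_mem_Qi [DecidableEq V] (i : V) {u : RG K G} (hu : u ∈ Qi K G i) :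
    (X (some i) : Amb K V) ∣ u := by
  have hle : Qi K G i ≤ (Ideal.span {(X (some i) : Amb K V)}).comap (RG K G).val := by
    refine Ideal.span_le.2 ?_
    rintro _ ⟨F, -, hiF, hu⟩
    rw [SetLike.mem_coe, Ideal.mem_comap, Subalgebra.coe_val, hu, Ideal.mem_span_singleton,
      faceMon]
    exact dvd_mul_of_dvd_left (dvd_prod_of_mem _ hiF) _
  exact Ideal.mem_span_singleton.1 (hle hu)

lemma one_le_of_mem_Qi [Fintype V] [DecidableEq V] (i : V) {u : RG K G} (hu : u ∈ Qi K G i)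
    {a : V → ℕ} {b : ℕ} (h : (u : Amb K V) = monom K a b) : 1 ≤ a i := by
  have hdvd := X_dvd_of_mem_Qi K G i hu
  rw [h, monom_eq_monomial, X_dvd_monomial] at hdvd
  simpa [monomExponent, Nat.one_le_iff_ne_zero] using hdvd

lemma vGen_mem_RG (i : V) : vGen K i ∈ RG K G :=
  Algebra.subset_adjoin (Or.inl (Or.inr ⟨i, rfl⟩))

lemma eGen_mem_RG {i j : V} (h : G.Adj i j) : eGen K i j ∈ RG K G :=
  Algebra.subset_adjoin (Or.inr ⟨i, j, h, rfl⟩)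

lemma mem_Qi_of_coe_eq_vGen_mul [DecidableEq V] (i : V) {p : Amb K V} (hp : p ∈ RG K G)
    {u : RG K G} (hu : (u : Amb K V) = vGen K i * p) : u ∈ Qi K G i := by
  have hv : (⟨vGen K i, vGen_mem_RG K G i⟩ : RG K G) ∈ Qi K G i :=
    Ideal.subset_span
      ⟨{i}, Or.inr (Or.inl ⟨i, rfl⟩), mem_singleton_self i, by simp [faceMon, vGen]⟩
  rw [show u = ⟨vGen K i, vGen_mem_RG K G i⟩ * ⟨p, hp⟩ from Subtype.ext hu]
  exact Ideal.mul_mem_right _ _ hv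

lemma prod_X_mul_X_pow_mem_RG (c : ℕ → V) (n : ℕ)
    (hc : ∀ j < n, G.Adj (c (2 * j)) (c (2 * j + 1))) :
    (∏ m ∈ range (2 * n), (X (some (c m)) : Amb K V)) * X none ^ n ∈ RG K G := by
  induction n with
  | zero => simp
  | succ n ih =>
    have hstep : (∏ m ∈ range (2 * (n + 1)), (X (some (c m)) : Amb K V)) * X none ^ (n + 1) =
        ((∏ m ∈ range (2 * n), X (some (c m))) * X none ^ n) *
          eGen K (c (2 * n)) (c (2 * n + 1)) := by
      rw [show 2 * (n + 1) = 2 * n + 1 + 1 by ring, prod_range_succ, prod_range_succ, eGen]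
      ring
    rw [hstep]
    exact mul_mem (ih fun j hj => hc j (by omega)) (eGen_mem_RG K G (hc n (by omega)))

lemma monom_one_eq_vGen_mul (n b : ℕ) (i : ZMod (n + 1)) :
    monom K (fun _ => 1) (b + 1) =
      vGen K i * ((∏ m ∈ range n, X (some (i + ((m + 1 : ℕ) : ZMod (n + 1))))) * X none ^ b) := by
  rw [monom, ← ZMod.prod_range_add_natCast n i, prod_range_succ', vGen]
  simp only [pow_one, Nat.cast_zero, add_zero]
  ring

lemma cycleG_adj_add_one {k : ℕ} (hk : k ≠ 1) (v : ZMod k) : (cycleG k).Adj v (v + 1) :=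
  have := ZMod.nontrivial_iff.2 hk
  ⟨fun h => one_ne_zero (left_eq_add.1 h), Or.inl rfl⟩

end ToricRing

theorem stmt14_general (K : Type*) [Field K] (ℓ : ℕ) :
    (∀ u : RG K (cycleG (2 * ℓ + 1)), u ∈ ⨅ i, Qi K (cycleG (2 * ℓ + 1)) i →
      ∀ (a : ZMod (2 * ℓ + 1) → ℕ) (b : ℕ),
        (u : Amb K (ZMod (2 * ℓ + 1))) = monom K a b →
          (∀ i, 1 ≤ a i) ∧ ℓ + 1 ≤ b) ∧
    ∃ u : RG K (cycleG (2 * ℓ + 1)), u ∈ ⨅ i, Qi K (cycleG (2 * ℓ + 1)) i ∧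
      (u : Amb K (ZMod (2 * ℓ + 1))) = monom K (fun _ => 1) (ℓ + 1) := by
  set G := cycleG (2 * ℓ + 1)
  refine ⟨fun u hu a b hab => ?_, ?_⟩
  · have ha : ∀ i, 1 ≤ a i := fun i => one_le_of_mem_Qi K G i (Ideal.mem_iInf.1 hu i) hab
    have hsum : ∑ i, a i ≤ 2 * b := sum_le_two_mul_of_monom_mem_RG K G (hab ▸ u.2)
    have hcard : 2 * ℓ + 1 ≤ ∑ i, a i := by
      simpa using card_nsmul_le_sum univ a 1 fun i _ => ha i
    exact ⟨ha, by omega⟩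
  · have hpath (i : ZMod (2 * ℓ + 1)) :
        (∏ m ∈ range (2 * ℓ), X (some (i + ((m + 1 : ℕ) : ZMod (2 * ℓ + 1))))) * X none ^ ℓ
          ∈ RG K G :=
      prod_X_mul_X_pow_mem_RG K G _ ℓ fun j hj => by
        convert cycleG_adj_add_one (by omega) (i + ((2 * j + 1 : ℕ) : ZMod (2 * ℓ + 1))) using 1
        push_cast
        ring
    have hw := monom_one_eq_vGen_mul K (2 * ℓ) ℓ
    have hw₀ : monom K (fun _ => 1) (ℓ + 1) ∈ RG K G := by
      rw [hw 0]
      exact mul_mem (vGen_mem_RG K G 0) (hpath 0)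
    exact ⟨⟨_, hw₀⟩,
      Ideal.mem_iInf.2 fun i => mem_Qi_of_coe_eq_vGen_mul K G i (hpath i) (hw i), rfl⟩

/-- Let `G = C_k` be the odd cycle with `k = 2ℓ+1` vertices.  Any
monomial `x^a t^b ∈ R_G` lying in `⋂ i, Q_i` satisfies `a i ≥ 1` for all `i` and
`b ≥ ℓ+1`; moreover this bound is attained (by `w₀ = x₁⋯x_k t^{ℓ+1}`), so the initial
degree of `⋂ i, Q_i` is `ℓ+1`. -/
theorem stmt14 (K : Type*) [Field K] (ℓ : ℕ) (hl : 1 ≤ ℓ) :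
    (∀ u : RG K (cycleG (2 * ℓ + 1)), u ∈ ⨅ i, Qi K (cycleG (2 * ℓ + 1)) i →
      ∀ (a : ZMod (2 * ℓ + 1) → ℕ) (b : ℕ),
        (u : Amb K (ZMod (2 * ℓ + 1))) = monom K a b →
          (∀ i, 1 ≤ a i) ∧ ℓ + 1 ≤ b) ∧
    ∃ u : RG K (cycleG (2 * ℓ + 1)), u ∈ ⨅ i, Qi K (cycleG (2 * ℓ + 1)) i ∧
      (u : Amb K (ZMod (2 * ℓ + 1))) = monom K (fun _ => 1) (ℓ + 1) :=
  stmt14_general K ℓ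
end
end
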